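/- Let M = N_T ×_f N be a warped product submanifold of a nearly trans-Sasakian manifold with ξ tangent to the invariant first factor N_T. Then for every X tangent to N_T and every normal vector ζ in the invariant normal subbundle ν: g(h(X,X), ζ) + g(h(φX, φX), ζ) = 0. -/

import Mathlib

/-- Abstract model of an isometrically immersed (doubly/singly) warped product
submanifold `M = N₁ ×_f N₂` of an almost contact metric manifold
`(M̃, φ, ξ, η, g̃)`, at the level of vector fields along `M`.  `F` plays the
role of the ring of smooth functions, `V` the module of ambient vector fields
along `M`; `act X a` is the derivative `X(a)`; `nab` is the ambient Levi-Civita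
connection `∇̃`, `nabM` the induced connection `∇` on `M` and `h` the second
fundamental form (Gauss formula `∇̃_X Y = ∇_X Y + h(X,Y)`); `Tang` is the
space of vector fields tangent to `M`, `D1`, `D2` those tangent to the factors
`N₁`, `N₂`; `P X`/`Fn X` are the tangential/normal parts of `φX` for `X`
tangent to `M`, and `Pc U W`/`Qc U W` the tangential/normal parts
`𝒫_U W`/`𝒬_U W` of `(∇̃_U φ) W = ∇̃_U (φW) − φ (∇̃_U W)`.  `η` is given by
`η(X) = g̃(X, ξ)`. -/
structure ContactWarpedSetting (F : Type*) (V : Type*) [CommRing F]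
    [AddCommGroup V] [Module F V] where
  g : V →ₗ[F] V →ₗ[F] F
  g_symm : ∀ X Y, g X Y = g Y X
  act : V → F → F
  act_add : ∀ X a b, act X (a + b) = act X a + act X b
  act_mul : ∀ X a b, act X (a * b) = a * act X b + b * act X a
  nab : V → V → V
  nab_metric : ∀ X Y Z, act X (g Y Z) = g (nab X Y) Z + g Y (nab X Z)
  phi : V →ₗ[F] V
  xi : V
  phi_phi : ∀ X, phi (phi X) = -X + (g X xi) • xi
  phi_xi : phi xi = 0
  g_xixi : g xi xi = 1
  phi_compat : ∀ X Y, g (phi X) (phi Y) = g X Y - (g X xi) * (g Y xi)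
  Tang : Submodule F V
  D1 : Submodule F V
  D2 : Submodule F V
  D1_le : D1 ≤ Tang
  D2_le : D2 ≤ Tang
  ortho : ∀ X ∈ D1, ∀ Z ∈ D2, g X Z = 0
  nabM : V → V → V
  nabM_tang : ∀ X Y, nabM X Y ∈ Tang
  h : V → V → V
  h_symm : ∀ X Y, h X Y = h Y X
  h_normal : ∀ X Y, ∀ T ∈ Tang, g (h X Y) T = 0
  gauss : ∀ X ∈ Tang, ∀ Y ∈ Tang, nab X Y = nabM X Y + h X Y
  P : V → V
  Fn : V → V
  phi_decomp : ∀ X ∈ Tang, phi X = P X + Fn X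
  P_tang : ∀ X, P X ∈ Tang
  Fn_normal : ∀ X, ∀ T ∈ Tang, g (Fn X) T = 0
  Pc : V → V → V
  Qc : V → V → V
  Pc_tang : ∀ U W, Pc U W ∈ Tang
  Qc_normal : ∀ U W, ∀ T ∈ Tang, g (Qc U W) T = 0
  cov_decomp : ∀ U ∈ Tang, ∀ W ∈ Tang,
    nab U (phi W) - phi (nab U W) = Pc U W + Qc U W


/-!
Apply the nearly trans-Sasakian identity to `(X, X)` paired with `φζ`, and to `(X, φX)` paired
with `ζ`. As `ξ`, `X`, `φX` are tangent, both right-hand sides are tangent and both pairings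
vanish. By the Gauss and Weingarten formulas, `g((∇̃_X φ) Y, ζ) = g(h(X, φY), ζ) + g(h(X, Y), φζ)`,
and `h(X, ξ) = 0` turns `g(h(X, φ²X), ζ)` into `-g(h(X, X), ζ)`. The two identities thus become
linear relations among `g(h(X,X),ζ)`, `g(h(φX,φX),ζ)` and `g(h(X,φX),φζ)`; the mixed term enters
each of them twice, so their difference is the claim.
-/

namespace ContactWarpedSetting

variable {F V : Type*} [CommRing F] [AddCommGroup V] [Module F V] (S : ContactWarpedSetting F V)

def IsNormal (ζ : V) : Prop := ∀ T ∈ S.Tang, S.g ζ T = 0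

/-- `(∇̃_U φ) W`. -/
def covPhi (U W : V) : V := S.nab U (S.phi W) - S.phi (S.nab U W)

def IsNearlyTransSasakian (α β : F) : Prop :=
  ∀ U W, S.covPhi U W + S.covPhi W U =
    α • ((2 * S.g U W) • S.xi - (S.g W S.xi) • U - (S.g U S.xi) • W) -
      β • ((S.g W S.xi) • S.phi U + (S.g U S.xi) • S.phi W)

variable {S} in
theorem IsNormal.g_tang {ζ T : V} (hζ : S.IsNormal ζ) (hT : T ∈ S.Tang) : S.g T ζ = 0 := by
  rw [S.g_symm]
  exact hζ T hT

theorem act_zero (U : V) : S.act U 0 = 0 := by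
  have h := S.act_add U 0 0
  rw [add_zero] at h
  linear_combination -h

theorem g_phi_xi (A : V) : S.g (S.phi A) S.xi = 0 := by
  have hphi3 : S.phi (S.phi (S.phi A)) = -S.phi A := by
    rw [S.phi_phi A, map_add, map_neg, map_smul, S.phi_xi, smul_zero, add_zero]
  have h : S.g (S.phi A) S.xi • S.xi = 0 := by
    have := S.phi_phi (S.phi A)
    rw [hphi3] at this
    exact left_eq_add.mp this
  simpa [S.g_xixi] using congrArg (fun v => S.g v S.xi) h

theorem g_phi_left (A B : V) : S.g (S.phi A) B = -S.g A (S.phi B) := by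
  have h := S.phi_compat A (S.phi B)
  rw [S.phi_phi B, map_add, map_neg, map_smul, smul_eq_mul, g_phi_xi, g_phi_xi] at h
  linear_combination -h

theorem phi_phi_mem_tang {Y : V} (hY : Y ∈ S.Tang) (hxi : S.xi ∈ S.Tang) :
    S.phi (S.phi Y) ∈ S.Tang := by
  rw [S.phi_phi Y]
  exact add_mem (neg_mem hY) (Submodule.smul_mem _ _ hxi)

theorem g_h_eq_g_nab {X Y ζ : V} (hX : X ∈ S.Tang) (hY : Y ∈ S.Tang) (hζ : S.IsNormal ζ) :
    S.g (S.h X Y) ζ = S.g (S.nab X Y) ζ := by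
  rw [S.gauss X hX Y hY, LinearMap.map_add₂, hζ.g_tang (S.nabM_tang X Y), zero_add]

/-- Weingarten formula. -/
theorem g_h_eq_neg_g_nab_normal {X Y ζ : V} (hX : X ∈ S.Tang) (hY : Y ∈ S.Tang)
    (hζ : S.IsNormal ζ) : S.g (S.h X Y) ζ = -S.g Y (S.nab X ζ) := by
  have h := S.nab_metric X Y ζ
  rw [hζ.g_tang hY, act_zero] at h
  rw [S.g_h_eq_g_nab hX hY hζ]
  linear_combination -h

theorem g_h_phi_phi {X Y ζ : V} (hX : X ∈ S.Tang) (hY : Y ∈ S.Tang) (hxi : S.xi ∈ S.Tang)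
    (hζ : S.IsNormal ζ) :
    S.g (S.h X (S.phi (S.phi Y))) ζ = -S.g (S.h X Y) ζ + S.g Y S.xi * S.g (S.h X S.xi) ζ := by
  rw [S.g_h_eq_neg_g_nab_normal hX (S.phi_phi_mem_tang hY hxi) hζ,
    S.g_h_eq_neg_g_nab_normal hX hY hζ, S.g_h_eq_neg_g_nab_normal hX hxi hζ, S.phi_phi Y,
    LinearMap.map_add₂, LinearMap.map_neg₂, LinearMap.map_smul₂, smul_eq_mul]
  ring

theorem g_covPhi_normal {X Y ζ : V} (hX : X ∈ S.Tang) (hY : Y ∈ S.Tang)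
    (hφY : S.phi Y ∈ S.Tang) (hζ : S.IsNormal ζ) (hφζ : S.IsNormal (S.phi ζ)) :
    S.g (S.covPhi X Y) ζ = S.g (S.h X (S.phi Y)) ζ + S.g (S.h X Y) (S.phi ζ) := by
  rw [covPhi, LinearMap.map_sub₂, g_phi_left, S.g_h_eq_g_nab hX hφY hζ,
    S.g_h_eq_g_nab hX hY hφζ, sub_neg_eq_add]

variable {S} in
theorem IsNearlyTransSasakian.g_covPhi_add_covPhi_normal {α β : F}
    (hS : S.IsNearlyTransSasakian α β) {U W ζ : V} (hxi : S.xi ∈ S.Tang) (hU : U ∈ S.Tang)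
    (hW : W ∈ S.Tang) (hφU : S.phi U ∈ S.Tang) (hφW : S.phi W ∈ S.Tang) (hζ : S.IsNormal ζ) :
    S.g (S.covPhi U W) ζ + S.g (S.covPhi W U) ζ = 0 := by
  rw [← LinearMap.map_add₂, hS U W]
  apply hζ.g_tang
  apply_rules [sub_mem, add_mem, Submodule.smul_mem]

end ContactWarpedSetting

theorem X1_2_general {F V : Type*} [CommRing F] [AddCommGroup V] [Module F V]
    (S : ContactWarpedSetting F V)
    (hxi : S.xi ∈ S.D1)
    (inv1 : ∀ X ∈ S.D1, S.phi X ∈ S.D1)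
    (α β : F)
    (nearlyTransSasakian : ∀ U W,
      (S.nab U (S.phi W) - S.phi (S.nab U W)) + (S.nab W (S.phi U) - S.phi (S.nab W U)) =
        α • ((2 * S.g U W) • S.xi - (S.g W S.xi) • U - (S.g U S.xi) • W) -
          β • ((S.g W S.xi) • S.phi U + (S.g U S.xi) • S.phi W))
    (ν : Submodule F V)
    (nu_normal : ∀ ζ ∈ ν, ∀ T ∈ S.Tang, S.g ζ T = 0)
    (nu_inv : ∀ ζ ∈ ν, S.phi ζ ∈ ν)
    (h_xi : ∀ X ∈ S.D1, S.h X S.xi = 0) :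
    ∀ X ∈ S.D1, ∀ ζ ∈ ν, S.g (S.h X X) ζ + S.g (S.h (S.phi X) (S.phi X)) ζ = 0 := by
  intro X hX ζ hζν
  have hS : S.IsNearlyTransSasakian α β := nearlyTransSasakian
  have hXT := S.D1_le hX
  have hφXT := S.D1_le (inv1 X hX)
  have hφφXT := S.D1_le (inv1 _ (inv1 X hX))
  have hxiT := S.D1_le hxi
  have hζ : S.IsNormal ζ := nu_normal ζ hζν
  have hφζ : S.IsNormal (S.phi ζ) := nu_normal _ (nu_inv ζ hζν)
  have hφφζ : S.g (S.h X X) (S.phi (S.phi ζ)) = -S.g (S.h X X) ζ := by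
    rw [S.phi_phi ζ, map_add, map_neg, map_smul, smul_eq_mul, S.h_normal X X S.xi hxiT, mul_zero,
      add_zero]
  have e₁ := hS.g_covPhi_add_covPhi_normal hxiT hXT hXT hφXT hφXT hφζ
  have e₂ := hS.g_covPhi_add_covPhi_normal hxiT hXT hφXT hφXT hφφXT hζ
  rw [S.g_covPhi_normal hXT hXT hφXT hφζ (nu_normal _ (nu_inv _ (nu_inv ζ hζν))), hφφζ] at e₁
  rw [S.g_covPhi_normal hXT hφXT hφφXT hζ hφζ, S.g_covPhi_normal hφXT hXT hφXT hζ hφζ,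
    S.g_h_phi_phi hXT hXT hxiT hζ, h_xi X hX, S.h_symm (S.phi X) X, map_zero,
    LinearMap.zero_apply, mul_zero, add_zero] at e₂
  linear_combination e₂ - e₁

theorem X1_2 {F V : Type*} [CommRing F] [AddCommGroup V] [Module F V]
    (S : ContactWarpedSetting F V)
    (hxi : S.xi ∈ S.D1)
    (dlf : V → F)
    (warp : ∀ X ∈ S.D1, ∀ Z ∈ S.D2, S.nabM X Z = dlf X • Z)
    (warp' : ∀ X ∈ S.D1, ∀ Z ∈ S.D2, S.nabM Z X = dlf X • Z)
    (inv1 : ∀ X ∈ S.D1, S.phi X ∈ S.D1)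
    (α β : F)
    (nearlyTransSasakian : ∀ U W,
      (S.nab U (S.phi W) - S.phi (S.nab U W)) + (S.nab W (S.phi U) - S.phi (S.nab W U)) =
        α • ((2 * S.g U W) • S.xi - (S.g W S.xi) • U - (S.g U S.xi) • W) -
          β • ((S.g W S.xi) • S.phi U + (S.g U S.xi) • S.phi W))
    (ν : Submodule F V)
    (nu_normal : ∀ ζ ∈ ν, ∀ T ∈ S.Tang, S.g ζ T = 0)
    (nu_inv : ∀ ζ ∈ ν, S.phi ζ ∈ ν)
    (h_xi : ∀ X ∈ S.D1, S.h X S.xi = 0) :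
    ∀ X ∈ S.D1, ∀ ζ ∈ ν, S.g (S.h X X) ζ + S.g (S.h (S.phi X) (S.phi X)) ζ = 0 :=
  X1_2_general S hxi inv1 α β nearlyTransSasakian ν nu_normal nu_inv h_xi
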